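/- Let D be a nondeterministic planning domain over fluents F, Γ = (D, s₀, φ) a FOND planning problem with PPLTL goal φ, and Γ' = (D', s₀', G') the compiled FOND planning problem. A strategy π for D is a strong solution to Γ (every execution of π from s₀ is finite and its trace satisfies φ) if and only if the strategy π' for D' defined on compiled histories by π'((s₀,σ₋₁)(s₁,σ'₁)⋯(sₙ,σ'ₙ)) = π(s₀ s₁ ⋯ sₙ) is a strong solution to Γ' (every execution of π' from s₀' is finite and ends in a compiled state satisfying G'). Consequently Γ has a strong solution if and only if Γ' has a strong solution. -/

import Mathlib

inductive PPLTL (P : Type) : Type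
  | atom : P → PPLTL P
  | neg : PPLTL P → PPLTL P
  | conj : PPLTL P → PPLTL P → PPLTL P
  | yesterday : PPLTL P → PPLTL P
  | since : PPLTL P → PPLTL P → PPLTL P
  deriving DecidableEq

namespace PPLTL

variable {P : Type}

/-- Satisfaction of a pure-past LTL formula on the trace `τ` at instant `i`. -/
def Sat (τ : ℕ → Set P) : PPLTL P → ℕ → Prop
  | atom p, i => p ∈ τ i
  | neg φ, i => ¬ Sat τ φ i
  | conj φ ψ, i => Sat τ φ i ∧ Sat τ ψ i
  | yesterday φ, i => 1 ≤ i ∧ Sat τ φ (i - 1)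
  | since φ ψ, i => ∃ k, k ≤ i ∧ Sat τ ψ k ∧ ∀ j, k < j → j ≤ i → Sat τ φ j

/-- Disjunction abbreviation. -/
def por (φ ψ : PPLTL P) : PPLTL P := neg (conj (neg φ) (neg ψ))

/-- Previous normal form transformation. -/
def pnf : PPLTL P → PPLTL P
  | atom p => atom p
  | neg φ => neg (pnf φ)
  | conj φ ψ => conj (pnf φ) (pnf ψ)
  | yesterday φ => yesterday φ
  | since φ ψ => por (pnf ψ) (conj (pnf φ) (yesterday (since φ ψ)))

/-- The set of subformulas of a formula. -/
def sub [DecidableEq P] : PPLTL P → Finset (PPLTL P)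
  | atom p => {atom p}
  | neg φ => insert (neg φ) (sub φ)
  | conj φ ψ => insert (conj φ ψ) (sub φ ∪ sub ψ)
  | yesterday φ => insert (yesterday φ) (sub φ)
  | since φ ψ => insert (since φ ψ) (sub φ ∪ sub ψ)


/-- The predicate `val(ϕ, σ, s)`: truth of ϕ given the interpretation `σ`
over the quoted subformulas Σφ (modelled as a predicate on formulas) and the
current propositional interpretation `s`. -/
def val (σ : PPLTL P → Prop) (s : Set P) : PPLTL P → Prop
  | atom p => p ∈ s
  | neg φ => ¬ val σ s φ
  | conj φ ψ => val σ s φ ∧ val σ s ψ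
  | yesterday φ => σ φ
  | since φ ψ => val σ s ψ ∨ (val σ s φ ∧ σ (since φ ψ))

/-- The interpretation `σ₋₁` assigning ⊥ to every quoted proposition. -/
def sigmaInit : PPLTL P → Prop := fun _ => False

end PPLTL

/-- A (possibly nondeterministic) planning domain with states `S` and
actions `A`. -/
structure Domain (S A : Type) where
  applicable : S → A → Prop
  tr : S → A → Set S

/-- The compiled domain `D'`: states are pairs of a fluent state and an
interpretation of the quoted subformulas; actions and applicability are
unchanged; the Σφ-component is deterministically updated by
`σ'(«ϕ») = val(ϕ, σ, s)`, identically for every action. -/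
def Domain.compiled {F A : Type} (D : Domain (Set F) A) :
    Domain (Set F × (PPLTL F → Prop)) A where
  applicable := fun p a => D.applicable p.1 a
  tr := fun p a => {q | q.1 ∈ D.tr p.1 a ∧ q.2 = fun ϕ => PPLTL.val p.2 p.1 ϕ}

namespace Domain

variable {S A : Type}

/-- The finite histories (stored with the most recent state first) generated
by following the strategy `π` from `s₀`. -/
inductive Run (D : Domain S A) (π : List S → Option A) (s₀ : S) : List S → Prop
  | init : Run D π s₀ [s₀]
  | step {h : List S} {s s' : S} {a : A} :
      Run D π s₀ (s :: h) → π (s :: h) = some a → s' ∈ D.tr s a →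
      Run D π s₀ (s' :: s :: h)

/-- The history `sᵢ ⋯ s₀` (most recent first) of the state sequence `e`. -/
def histUpTo (e : ℕ → S) (i : ℕ) : List S := ((List.range (i + 1)).map e).reverse

/-- An infinite execution of the strategy `π` from `s₀`. -/
def InfExec (D : Domain S A) (π : List S → Option A) (s₀ : S) (e : ℕ → S) : Prop :=
  e 0 = s₀ ∧ ∀ i, ∃ a, π (histUpTo e i) = some a ∧ e (i + 1) ∈ D.tr (e i) a

/-- `π` is a strong solution: it is a strategy (applicable whenever defined),
every maximal finite execution (one ending where `π` is undefined) reaches the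
goal, and there is no infinite execution. -/
def StrongSolution (D : Domain S A) (π : List S → Option A) (s₀ : S)
    (goal : List S → Prop) : Prop :=
  (∀ (h : List S) (s : S) (a : A), π (s :: h) = some a → D.applicable s a) ∧
  (∀ h, Run D π s₀ h → π h = none → goal h) ∧
  ¬ ∃ e : ℕ → S, InfExec D π s₀ e

end Domain

/-- A history (most recent state first) satisfies the PPLTL formula φ:
its induced trace satisfies φ at the last instant. -/
def HistSat {F : Type} (φ : PPLTL F) (h : List (Set F)) : Prop :=
  PPLTL.Sat (fun i => h.reverse.getD i ∅) φ (h.length - 1)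

/-- A compiled history ends in a state satisfying the reachability goal `G'`,
i.e. its last (most recent) compiled state `(s, σ)` satisfies `val(φ, σ, s)`. -/
def CompiledGoal {F : Type} (φ : PPLTL F) (h : List (Set F × (PPLTL F → Prop))) : Prop :=
  ∀ p t, h = p :: t → PPLTL.val p.2 p.1 φ

/-!
The compiled Σφ-component is a deterministic monitor for φ: along any trace τ, the interpretation
σᵢ reached after reading τ₀ ⋯ τᵢ₋₁ makes «ψ» true exactly when `Y ψ` holds at instant i, because
`ψ₁ S ψ₂` unfolds to `ψ₂ ∨ (ψ₁ ∧ Y (ψ₁ S ψ₂))`. Hence `val(φ, σᵢ, τᵢ)` is the truth of φ at i.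
Since σ is a function of the history, compiled histories reachable from `(s₀, σ₋₁)` are exactly the
lifts of histories of D, and runs, infinite executions and goals correspond under the lift.
-/

namespace List

theorem getD_reverse_cons_of_lt {α : Type*} {d : α} (s : α) {t : List α} {j : ℕ}
    (hj : j < t.length) : (s :: t).reverse.getD j d = t.reverse.getD j d := by
  rw [List.reverse_cons, List.getD_append _ _ _ _ (by simpa)]

theorem getD_reverse_cons_length {α : Type*} {d : α} (s : α) (t : List α) :
    (s :: t).reverse.getD t.length d = s := by
  rw [List.reverse_cons, List.getD_append_right _ _ _ _ (by simp)]
  simp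

end List

namespace PPLTL

variable {P : Type}

theorem sat_since_iff (τ : ℕ → Set P) (φ ψ : PPLTL P) (n : ℕ) :
    Sat τ (since φ ψ) n ↔ Sat τ ψ n ∨ (Sat τ φ n ∧ Sat τ (yesterday (since φ ψ)) n) := by
  simp only [Sat]
  constructor
  · rintro ⟨k, hkn, hψ, hφ⟩
    rcases hkn.eq_or_lt with rfl | hkn
    · exact Or.inl hψ
    · exact Or.inr ⟨hφ n hkn le_rfl, by omega, k, by omega, hψ, fun j hkj hjn => hφ j hkj (by omega)⟩
  · rintro (hψ | ⟨hφn, hn, k, hkn, hψ, hφ⟩)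
    · exact ⟨n, le_rfl, hψ, fun j hnj hjn => absurd hjn (not_le.2 hnj)⟩
    · refine ⟨k, by omega, hψ, fun j hkj hjn => ?_⟩
      rcases hjn.eq_or_lt with rfl | hjn
      · exact hφn
      · exact hφ j hkj (by omega)

theorem val_iff_sat {τ : ℕ → Set P} {n : ℕ} {σ : PPLTL P → Prop}
    (hσ : ∀ ψ, σ ψ ↔ Sat τ (yesterday ψ) n) (ϕ : PPLTL P) :
    val σ (τ n) ϕ ↔ Sat τ ϕ n := by
  induction ϕ with
  | atom p => rfl
  | neg φ ih => exact not_congr ih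
  | conj φ ψ ihφ ihψ => exact and_congr ihφ ihψ
  | yesterday φ => exact hσ φ
  | since φ ψ ihφ ihψ => rw [sat_since_iff, ← hσ, ← ihφ, ← ihψ]; rfl

/-- `sigmaSeq τ i` is the interpretation σᵢ of Σφ reached after reading `τ 0, …, τ (i - 1)`. -/
def sigmaSeq (τ : ℕ → Set P) : ℕ → PPLTL P → Prop
  | 0 => sigmaInit
  | n + 1 => val (sigmaSeq τ n) (τ n)

theorem sigmaSeq_iff (τ : ℕ → Set P) (n : ℕ) (ψ : PPLTL P) :
    sigmaSeq τ n ψ ↔ Sat τ (yesterday ψ) n := by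
  induction n generalizing ψ with
  | zero => simp [sigmaSeq, sigmaInit, Sat]
  | succ n ih => simpa [sigmaSeq, Sat] using val_iff_sat ih ψ

theorem val_sigmaSeq_iff_sat (τ : ℕ → Set P) (n : ℕ) (ϕ : PPLTL P) :
    val (sigmaSeq τ n) (τ n) ϕ ↔ Sat τ ϕ n :=
  val_iff_sat (sigmaSeq_iff τ n) ϕ

def sigmaAfter : List (Set P) → PPLTL P → Prop
  | [] => sigmaInit
  | s :: t => val (sigmaAfter t) s

theorem sigmaAfter_eq_sigmaSeq {τ : ℕ → Set P} {t : List (Set P)}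
    (hτ : ∀ j < t.length, t.reverse.getD j ∅ = τ j) : sigmaAfter t = sigmaSeq τ t.length := by
  induction t with
  | nil => rfl
  | cons s t ih =>
    have hprefix : ∀ j < t.length, t.reverse.getD j ∅ = τ j := fun j hj => by
      rw [← List.getD_reverse_cons_of_lt s hj, hτ j (by simp only [List.length_cons]; omega)]
    have hlast : s = τ t.length := by
      rw [← hτ t.length (by simp), List.getD_reverse_cons_length]
    simp [sigmaAfter, sigmaSeq, ih hprefix, hlast]

end PPLTL

open PPLTL

theorem val_sigmaAfter_iff_histSat {F : Type} (φ : PPLTL F) (s : Set F) (t : List (Set F)) :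
    val (sigmaAfter t) s φ ↔ HistSat φ (s :: t) := by
  set τ : ℕ → Set F := fun i => (s :: t).reverse.getD i ∅
  have hσ : sigmaAfter t = sigmaSeq τ t.length :=
    sigmaAfter_eq_sigmaSeq fun j hj => (List.getD_reverse_cons_of_lt s hj).symm
  have hs : s = τ t.length := (List.getD_reverse_cons_length s t).symm
  calc val (sigmaAfter t) s φ ↔ val (sigmaSeq τ t.length) (τ t.length) φ := by rw [hσ, ← hs]
    _ ↔ HistSat φ (s :: t) := val_sigmaSeq_iff_sat τ t.length φ

namespace Domain

variable {S A : Type}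

theorem Run.exists_cons {D : Domain S A} {π : List S → Option A} {s₀ : S} {h : List S}
    (hr : Run D π s₀ h) : ∃ s t, h = s :: t := by
  cases hr <;> exact ⟨_, _, rfl⟩

theorem histUpTo_succ (e : ℕ → S) (n : ℕ) : histUpTo e (n + 1) = e (n + 1) :: histUpTo e n := by
  simp [histUpTo, List.range_succ]

variable {F : Type}

def liftHist : List (Set F) → List (Set F × (PPLTL F → Prop))
  | [] => []
  | s :: t => (s, sigmaAfter t) :: liftHist t

def liftExec (e : ℕ → Set F) (i : ℕ) : Set F × (PPLTL F → Prop) := (e i, sigmaSeq e i)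

theorem map_fst_liftHist (h : List (Set F)) : (liftHist h).map Prod.fst = h := by
  induction h with
  | nil => rfl
  | cons s t ih => simp [liftHist, ih]

theorem sigmaAfter_histUpTo (e : ℕ → Set F) (n : ℕ) :
    sigmaAfter (histUpTo e n) = sigmaSeq e (n + 1) := by
  induction n with
  | zero => rfl
  | succ n ih => rw [histUpTo_succ, sigmaAfter, ih]; rfl

theorem liftHist_histUpTo (e : ℕ → Set F) (n : ℕ) :
    liftHist (histUpTo e n) = histUpTo (liftExec e) n := by
  induction n with
  | zero => rfl
  | succ n ih => rw [histUpTo_succ, histUpTo_succ, liftHist, ih, sigmaAfter_histUpTo]; rfl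

variable {D : Domain (Set F) A} {π' : List (Set F × (PPLTL F → Prop)) → Option A} {s₀ : Set F}

theorem run_compiled_iff {h' : List (Set F × (PPLTL F → Prop))} :
    Run D.compiled π' (s₀, sigmaInit) h' ↔
      ∃ h, Run D (fun h => π' (liftHist h)) s₀ h ∧ h' = liftHist h := by
  constructor
  · intro hr
    induction hr with
    | init => exact ⟨[s₀], Run.init, rfl⟩
    | @step t' p q a _ ha htr ih =>
      obtain ⟨h, hrun, hlift⟩ := ih
      obtain ⟨s, t, rfl⟩ := hrun.exists_cons
      obtain ⟨rfl, rfl⟩ := List.cons.inj hlift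
      obtain ⟨hq, hσ⟩ := htr
      exact ⟨q.1 :: s :: t, Run.step hrun ha hq, congrArg (· :: _) (Prod.ext rfl hσ)⟩
  · rintro ⟨h, hrun, rfl⟩
    induction hrun with
    | init => exact Run.init
    | step _ ha htr ih => exact Run.step ih ha ⟨htr, rfl⟩

theorem infExec_liftExec_iff {e : ℕ → Set F} :
    InfExec D.compiled π' (s₀, sigmaInit) (liftExec e) ↔
      InfExec D (fun h => π' (liftHist h)) s₀ e := by
  simp only [InfExec, liftHist_histUpTo]
  refine and_congr (by simp [liftExec, sigmaSeq]) (forall_congr' fun i => exists_congr fun a => ?_)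
  exact and_congr_right fun _ => and_iff_left rfl

theorem InfExec.eq_liftExec {e' : ℕ → Set F × (PPLTL F → Prop)}
    (he : InfExec D.compiled π' (s₀, sigmaInit) e') : e' = liftExec fun i => (e' i).1 := by
  funext i
  refine Prod.ext rfl ?_
  induction i with
  | zero => rw [he.1]; rfl
  | succ i ih =>
    obtain ⟨a, -, -, hσ⟩ := he.2 i
    rw [hσ, ih]
    rfl

theorem exists_infExec_compiled_iff :
    (∃ e', InfExec D.compiled π' (s₀, sigmaInit) e') ↔
      ∃ e, InfExec D (fun h => π' (liftHist h)) s₀ e :=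
  ⟨fun ⟨_, he⟩ => ⟨_, infExec_liftExec_iff.1 (he.eq_liftExec ▸ he)⟩,
    fun ⟨_, he⟩ => ⟨_, infExec_liftExec_iff.2 he⟩⟩

theorem compiledGoal_liftHist_cons_iff (φ : PPLTL F) (s : Set F) (t : List (Set F)) :
    CompiledGoal φ (liftHist (s :: t)) ↔ HistSat φ (s :: t) := by
  rw [← val_sigmaAfter_iff_histSat]
  simp [CompiledGoal, liftHist]

theorem forall_run_compiledGoal_iff (φ : PPLTL F) :
    (∀ h', Run D.compiled π' (s₀, sigmaInit) h' → π' h' = none → CompiledGoal φ h') ↔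
      ∀ h, Run D (fun h => π' (liftHist h)) s₀ h → π' (liftHist h) = none → HistSat φ h := by
  simp only [run_compiled_iff]
  refine ⟨fun hgoal h hrun hnone => ?_, ?_⟩
  · obtain ⟨s, t, rfl⟩ := hrun.exists_cons
    exact (compiledGoal_liftHist_cons_iff φ s t).1 (hgoal _ ⟨_, hrun, rfl⟩ hnone)
  · rintro hgoal _ ⟨h, hrun, rfl⟩ hnone
    obtain ⟨s, t, rfl⟩ := hrun.exists_cons
    exact (compiledGoal_liftHist_cons_iff φ s t).2 (hgoal _ hrun hnone)

theorem strongSolution_compiled_iff (φ : PPLTL F) :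
    StrongSolution D.compiled π' (s₀, sigmaInit) (CompiledGoal φ) ↔
      (∀ h p a, π' (p :: h) = some a → D.applicable p.1 a) ∧
        StrongSolution D (fun h => π' (liftHist h)) s₀ (HistSat φ) := by
  unfold StrongSolution
  rw [forall_run_compiledGoal_iff, exists_infExec_compiled_iff]
  exact ⟨fun ⟨happ, hrest⟩ => ⟨happ, fun h s a ha => happ _ (s, _) a ha, hrest⟩,
    fun ⟨happ, _, hrest⟩ => ⟨happ, hrest⟩⟩

end Domain

open Domain

theorem strong_solution_iff_compiled_general {F A : Type} (D : Domain (Set F) A)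
    (φ : PPLTL F) (s₀ : Set F) :
    (∀ π : List (Set F) → Option A,
        Domain.StrongSolution D π s₀ (HistSat φ) ↔
          Domain.StrongSolution D.compiled (fun h' => π (h'.map Prod.fst))
            (s₀, PPLTL.sigmaInit) (CompiledGoal φ)) ∧
    ((∃ π : List (Set F) → Option A, Domain.StrongSolution D π s₀ (HistSat φ)) ↔
      ∃ π' : List (Set F × (PPLTL F → Prop)) → Option A,
        Domain.StrongSolution D.compiled π' (s₀, PPLTL.sigmaInit) (CompiledGoal φ)) := by
  have lifted : ∀ π : List (Set F) → Option A,
      StrongSolution D π s₀ (HistSat φ) ↔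
        StrongSolution D.compiled (fun h' => π (h'.map Prod.fst)) (s₀, sigmaInit)
          (CompiledGoal φ) := by
    intro π
    simp only [strongSolution_compiled_iff, map_fst_liftHist]
    exact ⟨fun hπ => ⟨fun h p a ha => hπ.1 _ p.1 a ha, hπ⟩, And.right⟩
  exact ⟨lifted, fun ⟨π, hπ⟩ => ⟨_, (lifted π).1 hπ⟩,
    fun ⟨_, hπ'⟩ => ⟨_, ((strongSolution_compiled_iff φ).1 hπ').2⟩⟩

/-- A strategy `π` is a strong solution to `Γ = (D, s₀, φ)`
iff the strategy `π'` defined on compiled histories by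
`π'((s₀,σ₋₁)(s₁,σ'₁)⋯(sₙ,σ'ₙ)) = π(s₀ s₁ ⋯ sₙ)` is a strong solution to the
compiled problem `Γ' = (D', (s₀,σ₋₁), G')`; consequently `Γ` has a strong
solution iff `Γ'` has one. -/
theorem strong_solution_iff_compiled {F A : Type} (D : Domain (Set F) A)
    (hne : ∀ s a, D.applicable s a → (D.tr s a).Nonempty)
    (φ : PPLTL F) (s₀ : Set F) :
    (∀ π : List (Set F) → Option A,
        Domain.StrongSolution D π s₀ (HistSat φ) ↔
          Domain.StrongSolution D.compiled (fun h' => π (h'.map Prod.fst))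
            (s₀, PPLTL.sigmaInit) (CompiledGoal φ)) ∧
    ((∃ π : List (Set F) → Option A, Domain.StrongSolution D π s₀ (HistSat φ)) ↔
      ∃ π' : List (Set F × (PPLTL F → Prop)) → Option A,
        Domain.StrongSolution D.compiled π' (s₀, PPLTL.sigmaInit) (CompiledGoal φ)) :=
  strong_solution_iff_compiled_general D φ s₀
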